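/- arXiv:1603.07622 — 6 statements merged into one kernel-verified Lean document; each statement's English description precedes it below -/
import Mathlib

section
/- For every ν > 0 and every z ∈ ℝ, the modified parabolic cylinder function admits the integral representation D̃_ν(z) = (1/Γ(ν)) ∫₀^∞ t^{ν−1} e^{−t²/2 − z t} dt. -/
open Real Filter Finset MeasureTheory

/-- The even power series `u(z) = 1 + ∑_{k=1}^∞ (∏_{j=0}^{k-1}(ν+2j)) z^{2k}/(2k)!`
(the `k = 0` term of the `tsum` equals `1`). -/
noncomputable def evenSeries (ν z : ℝ) : ℝ :=
  ∑' k : ℕ, (∏ j ∈ Finset.range k, (ν + 2 * (j : ℝ))) * z ^ (2 * k) / (Nat.factorial (2 * k))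

/-- The odd power series `v(z) = ∑_{k=0}^∞ (∏_{j=0}^{k-1}(ν+2j+1)) z^{2k+1}/(2k+1)!`
(the `k = 0` term equals `z`). -/
noncomputable def oddSeries (ν z : ℝ) : ℝ :=
  ∑' k : ℕ, (∏ j ∈ Finset.range k, (ν + 2 * (j : ℝ) + 1)) * z ^ (2 * k + 1) /
    (Nat.factorial (2 * k + 1))

/-- The modified parabolic cylinder function
`D̃_ν(y) = 2^{−ν/2} √π [ (1 + ∑_{k≥1} ∏_{j=0}^{k-1}(ν+2j) y^{2k}/(2k)!)/Γ((ν+1)/2)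
  − √2 y (1 + ∑_{k≥1} ∏_{j=0}^{k-1}(ν+2j+1) y^{2k}/(2k+1)!)/Γ(ν/2) ]`,
which equals `e^{y²/4} D_{−ν}(y)` for the parabolic cylinder function `D_{−ν}`.
Note `y * (1 + ∑_{k≥1} ∏_{j=0}^{k-1}(ν+2j+1) y^{2k}/(2k+1)!) = oddSeries ν y`. -/
noncomputable def Dtilde (ν : ℝ) (y : ℝ) : ℝ :=
  (2 : ℝ) ^ (-ν / 2) * Real.sqrt Real.pi *
    (evenSeries ν y / Real.Gamma ((ν + 1) / 2) -
      Real.sqrt 2 * oddSeries ν y / Real.Gamma (ν / 2))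

/-!
Expanding `e^{-zt}` in its power series and integrating term by term (the terms are dominated by
`t^{ν-1} e^{-t²/2 + |z| t}`) writes the integral as `∑ (-z)^n / n! · M(ν + n)`, where
`M(s) = ∫₀^∞ t^{s-1} e^{-t²/2} dt = 2^{s/2-1} Γ(s/2)`. The recursion `M(s + 2) = s M(s)` turns the
even and odd parts of this sum into `M(ν)` and `-M(ν + 1)` times the two power series defining
`D̃_ν`, and Legendre's duplication formula identifies `M(ν)/Γ(ν)` and `M(ν + 1)/Γ(ν)` with the
coefficients in `D̃_ν`.
-/

open scoped Nat

theorem hasSum_integral_mul_exp_mul {μ : Measure ℝ} {g : ℝ → ℝ} {c : ℝ}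
    (hg : AEStronglyMeasurable g μ) (hdom : Integrable (fun t => exp |c * t| * ‖g t‖) μ) :
    HasSum (fun n : ℕ => c ^ n / n ! * ∫ t, t ^ n * g t ∂μ) (∫ t, g t * exp (c * t) ∂μ) := by
  set F : ℕ → ℝ → ℝ := fun n t => (c * t) ^ n / n ! * g t
  have hnorm (n : ℕ) (t : ℝ) : ‖F n t‖ = |c * t| ^ n / n ! * ‖g t‖ := by
    simp [F]
  have hF_int (n : ℕ) : Integrable (F n) μ := by
    refine hdom.mono' ?_ (Eventually.of_forall fun t => ?_)
    · exact (((continuous_const.mul continuous_id).pow n).div_const _).aestronglyMeasurable.mul hg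
    · rw [hnorm]
      gcongr
      exact Real.pow_div_factorial_le_exp _ (abs_nonneg _) n
  have hF_sum : Summable fun n => ∫ t, ‖F n t‖ ∂μ := by
    refine summable_of_sum_range_le (c := ∫ t, exp |c * t| * ‖g t‖ ∂μ)
      (fun n => integral_nonneg fun t => norm_nonneg _) fun N => ?_
    rw [← integral_finsetSum _ fun n _ => (hF_int n).norm]
    refine integral_mono (integrable_finsetSum _ fun n _ => (hF_int n).norm) hdom fun t => ?_
    simp only [hnorm, ← Finset.sum_mul]
    gcongr
    exact sum_le_exp_of_nonneg (abs_nonneg _) N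
  have hexp (t : ℝ) : ∑' n, F n t = g t * exp (c * t) := by
    rw [tsum_mul_right, (NormedSpace.expSeries_div_hasSum_exp (c * t)).tsum_eq, Real.exp_eq_exp_ℝ,
      mul_comm]
  have hterm (n : ℕ) : ∫ t, F n t ∂μ = c ^ n / n ! * ∫ t, t ^ n * g t ∂μ := by
    rw [← integral_const_mul]
    congr 1 with t
    simp only [F, mul_pow]
    ring
  simpa only [hterm, hexp] using hasSum_integral_of_summable_integral_norm hF_int hF_sum

noncomputable def gaussianMellin (s : ℝ) : ℝ := 2 ^ (s / 2 - 1) * Gamma (s / 2)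

theorem integral_rpow_mul_exp_neg_sq_div_two {s : ℝ} (hs : 0 < s) :
    ∫ t in Set.Ioi 0, t ^ (s - 1) * exp (-t ^ 2 / 2) = gaussianMellin s := by
  have h := integral_rpow_mul_exp_neg_mul_rpow two_pos (q := s - 1) (by linarith) one_half_pos
  simp only [rpow_two, sub_add_cancel] at h
  have h2 : (1 / 2 : ℝ) ^ (-s / 2) * (1 / 2) = 2 ^ (s / 2 - 1) := by
    rw [one_div, inv_rpow zero_le_two, ← rpow_neg zero_le_two, ← rpow_neg_one 2,
      ← rpow_add two_pos]
    ring_nf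
  rw [gaussianMellin, ← h2, ← h]
  congr with t
  ring_nf

theorem gaussianMellin_add_two {s : ℝ} (hs : s ≠ 0) :
    gaussianMellin (s + 2) = s * gaussianMellin s := by
  have hΓ : Gamma ((s + 2) / 2) = s / 2 * Gamma (s / 2) := by
    rw [show (s + 2) / 2 = s / 2 + 1 by ring, Gamma_add_one (by positivity)]
  have h2 : (2 : ℝ) ^ ((s + 2) / 2 - 1) = 2 * 2 ^ (s / 2 - 1) := by
    rw [show (s + 2) / 2 - 1 = 1 + (s / 2 - 1) by ring, rpow_add two_pos, rpow_one]
  rw [gaussianMellin, gaussianMellin, hΓ, h2]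
  ring

theorem gaussianMellin_add_two_mul {s : ℝ} (hs : 0 < s) (k : ℕ) :
    gaussianMellin (s + 2 * k) = (∏ j ∈ range k, (s + 2 * j)) * gaussianMellin s := by
  induction k with
  | zero => simp
  | succ k ih =>
    rw [Nat.cast_succ, show s + 2 * (k + 1 : ℝ) = s + 2 * k + 2 by ring,
      gaussianMellin_add_two (by positivity), ih, prod_range_succ]
    ring

theorem hasSum_integral_rpow_mul_exp_neg_sq_sub {ν : ℝ} (hν : 0 < ν) (z : ℝ) :
    HasSum (fun n : ℕ => (-z) ^ n / n ! * gaussianMellin (ν + n))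
      (∫ t in Set.Ioi 0, t ^ (ν - 1) * exp (-t ^ 2 / 2 - z * t)) := by
  set g : ℝ → ℝ := fun t => t ^ (ν - 1) * exp (-t ^ 2 / 2)
  have hg : AEStronglyMeasurable g (volume.restrict (Set.Ioi 0)) :=
    (by fun_prop : Measurable g).aestronglyMeasurable
  have hdom : IntegrableOn (fun t => exp |-z * t| * ‖g t‖) (Set.Ioi 0) := by
    refine ((integrableOn_rpow_mul_exp_neg_mul_sq (b := 1 / 4) (by norm_num)
      (by linarith : -1 < ν - 1)).const_mul (exp (z ^ 2))).mono' (by fun_prop)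
      ((ae_restrict_mem measurableSet_Ioi).mono fun t (ht : 0 < t) => ?_)
    have hgt : 0 ≤ g t := by positivity
    rw [norm_mul, norm_norm, Real.norm_of_nonneg hgt, Real.norm_of_nonneg (exp_pos _).le,
      mul_left_comm, ← exp_add, mul_left_comm, ← exp_add, abs_mul, abs_neg, abs_of_pos ht]
    gcongr _ * exp ?_
    nlinarith [sq_nonneg (|z| - t / 2), sq_abs z]
  have hmoment (n : ℕ) : ∫ t in Set.Ioi 0, t ^ n * g t = gaussianMellin (ν + n) := by
    rw [← integral_rpow_mul_exp_neg_sq_div_two (by positivity)]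
    refine setIntegral_congr_fun measurableSet_Ioi fun t (ht : 0 < t) => ?_
    rw [← mul_assoc, ← rpow_natCast, ← rpow_add ht]
    ring_nf
  have hexp (t : ℝ) : g t * exp (-z * t) = t ^ (ν - 1) * exp (-t ^ 2 / 2 - z * t) := by
    rw [mul_assoc, ← exp_add]
    ring_nf
  simpa only [hmoment, hexp] using hasSum_integral_mul_exp_mul hg hdom

theorem integral_rpow_mul_exp_neg_sq_sub {ν : ℝ} (hν : 0 < ν) (z : ℝ) :
    ∫ t in Set.Ioi 0, t ^ (ν - 1) * exp (-t ^ 2 / 2 - z * t) =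
      gaussianMellin ν * evenSeries ν z - gaussianMellin (ν + 1) * oddSeries ν z := by
  have h := hasSum_integral_rpow_mul_exp_neg_sq_sub hν z
  have heven (k : ℕ) : (-z) ^ (2 * k) / (2 * k)! * gaussianMellin (ν + (2 * k : ℕ)) =
      gaussianMellin ν * ((∏ j ∈ range k, (ν + 2 * (j : ℝ))) * z ^ (2 * k) / (2 * k)!) := by
    rw [Nat.cast_mul, Nat.cast_two, gaussianMellin_add_two_mul hν, (even_two_mul k).neg_pow]
    ring
  have hodd (k : ℕ) : (-z) ^ (2 * k + 1) / (2 * k + 1)! * gaussianMellin (ν + (2 * k + 1 : ℕ)) =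
      -(gaussianMellin (ν + 1) *
        ((∏ j ∈ range k, (ν + 2 * (j : ℝ) + 1)) * z ^ (2 * k + 1) / (2 * k + 1)!)) := by
    rw [show ν + ((2 * k + 1 : ℕ) : ℝ) = ν + 1 + 2 * k by push_cast; ring,
      gaussianMellin_add_two_mul (by positivity), (odd_two_mul_add_one k).neg_pow]
    simp only [add_right_comm ν 1]
    ring
  set f : ℕ → ℝ := fun n => (-z) ^ n / n ! * gaussianMellin (ν + n)
  have he : Summable fun k => f (2 * k) :=
    h.summable.comp_injective (mul_right_injective₀ two_ne_zero)
  have ho : Summable fun k => f (2 * k + 1) :=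
    h.summable.comp_injective ((add_left_injective 1).comp (mul_right_injective₀ two_ne_zero))
  rw [← h.tsum_eq, ← tsum_even_add_odd he ho, tsum_congr heven, tsum_congr hodd,
    tsum_neg, tsum_mul_left, tsum_mul_left, evenSeries, oddSeries, sub_eq_add_neg]

theorem Dtilde_mul_Gamma {ν : ℝ} (hν : 0 < ν) (z : ℝ) :
    Dtilde ν z * Gamma ν =
      gaussianMellin ν * evenSeries ν z - gaussianMellin (ν + 1) * oddSeries ν z := by
  have hdup := Gamma_mul_Gamma_add_half (ν / 2)
  rw [show 2 * (ν / 2) = ν by ring, show ν / 2 + 1 / 2 = (ν + 1) / 2 by ring] at hdup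
  have hΓ₁ : Gamma ((ν + 1) / 2) ≠ 0 := (Gamma_pos_of_pos (by positivity)).ne'
  have hΓ₂ : Gamma (ν / 2) ≠ 0 := (Gamma_pos_of_pos (by positivity)).ne'
  set p : ℝ := 2 ^ (ν / 2)
  have hp : p ≠ 0 := by positivity
  have h2 : (2 : ℝ) ^ (1 - ν) = 2 / p ^ 2 := by
    rw [← rpow_natCast, ← rpow_mul zero_le_two, rpow_sub two_pos, rpow_one]
    ring_nf
  have hneg : (2 : ℝ) ^ (-ν / 2) = p⁻¹ := by rw [neg_div, rpow_neg zero_le_two]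
  have hM₀ : gaussianMellin ν = p / 2 * Gamma (ν / 2) := by
    rw [gaussianMellin, rpow_sub two_pos, rpow_one]
  have hM₁ : gaussianMellin (ν + 1) = p * √2 / 2 * Gamma ((ν + 1) / 2) := by
    rw [gaussianMellin, show (ν + 1) / 2 - 1 = ν / 2 + 1 / 2 - 1 by ring, rpow_sub two_pos,
      rpow_add two_pos, rpow_one, sqrt_eq_rpow]
  have hdup' : p ^ 2 * (Gamma (ν / 2) * Gamma ((ν + 1) / 2)) = 2 * √π * Gamma ν := by
    rw [hdup, h2]
    field_simp
  rw [Dtilde, hneg, hM₀, hM₁]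
  field_simp
  linear_combination (Gamma ((ν + 1) / 2) * √2 * oddSeries ν z - evenSeries ν z * Gamma (ν / 2)) *
    hdup'

/-- For every `ν > 0` and `z ∈ ℝ`, the integral representation
`D̃_ν(z) = (1/Γ(ν)) ∫₀^∞ t^{ν−1} e^{−t²/2 − z t} dt` holds. -/
theorem Dtilde_integral_repr (ν : ℝ) (hν : 0 < ν) (z : ℝ) :
    Dtilde ν z =
      (1 / Real.Gamma ν) *
        ∫ t in Set.Ioi (0 : ℝ), t ^ (ν - 1) * Real.exp (-t ^ 2 / 2 - z * t) := by
  rw [integral_rpow_mul_exp_neg_sq_sub hν z, ← Dtilde_mul_Gamma hν z]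
  field_simp [(Gamma_pos_of_pos hν).ne']
end

section
/- Let a, σ̃ > 0 and b > 0, and set σ = σ̃/√(2a). Then the function f(r) = D̃_{b/a}((b − r)/σ) is twice differentiable on ℝ and satisfies the second-order ODE (σ̃²/2)·f''(r) + a(b − r)·f'(r) − b·f(r) = 0 for all r ∈ ℝ. -/
open Real Filter Finset MeasureTheory

/-!
The Taylor coefficients `aₙ`, normalised as `w(y) = ∑ aₙ yⁿ / n!`, of a solution of the Hermite-type
equation `w'' - y w' - ν w = 0` satisfy `aₙ₊₂ = (n + ν) aₙ`. Conversely, since `|a₂ₖ|` and `|a₂ₖ₊₁|`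
grow at most like `Cᵏ k!`, every such sequence defines an entire solution. `evenSeries ν` and
`oddSeries ν` are the solutions with `(w(0), w'(0)) = (1, 0)` and `(0, 1)`, so `D̃_ν`, a linear
combination of them, is a solution too. The affine substitution `y = (b - r) / σ`, with `b = aν` and
`σ̃² = 2aσ²`, turns this equation into `(σ̃²/2) f'' + a (b - r) f' - b f = 0`.
-/

open scoped Nat

noncomputable def egf (a : ℕ → ℝ) (y : ℝ) : ℝ := ∑' n, a n * y ^ n / n !

def EntireEGF (a : ℕ → ℝ) : Prop := ∀ R : ℝ, Summable fun n => |a n| * R ^ n / n !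

theorem natCast_mul_pow_sub_one_le {x R : ℝ} (hx : 0 ≤ x) (hxR : x ≤ R) (hR : 1 ≤ R) (n : ℕ) :
    n * x ^ (n - 1) ≤ (2 * R) ^ n := by
  have hn : (n : ℝ) ≤ 2 ^ n := by exact_mod_cast Nat.lt_two_pow_self.le
  have hxn : x ^ (n - 1) ≤ R ^ n :=
    (pow_le_pow_left₀ hx hxR _).trans (pow_le_pow_right₀ hR (Nat.sub_le n 1))
  rw [mul_pow]
  exact mul_le_mul hn hxn (by positivity) (by positivity)

namespace EntireEGF

variable {a : ℕ → ℝ}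

theorem summable (ha : EntireEGF a) (y : ℝ) : Summable fun n => a n * y ^ n / n ! :=
  (ha |y|).of_norm_bounded fun n => by simp

theorem shift (ha : EntireEGF a) : EntireEGF fun n => a (n + 1) := by
  intro R
  have hR : 1 ≤ |R| + 1 := by linarith [abs_nonneg R]
  refine ((summable_nat_add_iff 1).mpr (ha (2 * (|R| + 1)))).of_norm_bounded fun n => ?_
  have hpow := natCast_mul_pow_sub_one_le (abs_nonneg R) (by linarith) hR (n + 1)
  rw [Nat.add_sub_cancel, Nat.cast_succ] at hpow
  rw [Nat.factorial_succ, Nat.cast_mul, Nat.cast_succ]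
  simp only [norm_div, norm_mul, norm_pow, Real.norm_eq_abs, abs_abs, Nat.abs_cast]
  rw [mul_div_assoc, mul_div_assoc]
  gcongr |a (n + 1)| * ?_
  rw [div_le_div_iff₀ (by positivity) (by positivity)]
  nlinarith [Nat.factorial_pos n]

end EntireEGF

section egf

variable {a : ℕ → ℝ}

theorem hasDerivAt_egf (ha : EntireEGF a) (y : ℝ) :
    HasDerivAt (egf a) (egf (fun n => a (n + 1)) y) y := by
  set R := |y| + 1
  have hR : 1 ≤ R := by linarith [abs_nonneg y]
  have hyR : y ∈ Metric.ball (0 : ℝ) R := by simp [R]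
  have hderiv := hasDerivAt_tsum_of_isPreconnected (ha (2 * R)) Metric.isOpen_ball
    (convex_ball (0 : ℝ) R).isPreconnected
    (g := fun n x => a n * x ^ n / n !) (g' := fun n x => a n * (n * x ^ (n - 1)) / n !)
    (fun n x _ => ((hasDerivAt_pow n x).const_mul (a n)).div_const _)
    (fun n x hx => by
      have hxR : |x| ≤ R := by simpa using (Metric.mem_ball.mp hx).le
      simp only [norm_div, norm_mul, norm_pow, Real.norm_eq_abs, Nat.abs_cast]
      gcongr
      exact natCast_mul_pow_sub_one_le (abs_nonneg x) hxR hR n)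
    hyR (ha.summable y) hyR
  have hterm : ∀ n : ℕ,
      a (n + 1) * (↑(n + 1) * y ^ (n + 1 - 1)) / (n + 1)! = a (n + 1) * y ^ n / n ! := by
    intro n
    rw [Nat.add_sub_cancel, Nat.factorial_succ, Nat.cast_mul]
    field_simp
  have hvalue : ∑' n : ℕ, a n * (n * y ^ (n - 1)) / n ! = egf (fun n => a (n + 1)) y := by
    rw [tsum_eq_zero_add' (f := fun n : ℕ => a n * (n * y ^ (n - 1)) / n !)
      ((ha.shift.summable y).congr fun n => (hterm n).symm), tsum_congr hterm]
    simp [egf]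
  rwa [hvalue] at hderiv

theorem egf_hermite_ode {ν : ℝ} (ha : EntireEGF a) (hrec : ∀ n, a (n + 2) = (n + ν) * a n)
    (y : ℝ) :
    egf (fun n => a (n + 2)) y - y * egf (fun n => a (n + 1)) y - ν * egf a y = 0 := by
  have hterm : ∀ n : ℕ, (n + 1 : ℕ) * (a (n + 1) * y ^ (n + 1) / (n + 1)!) =
      y * (a (n + 1) * y ^ n / n !) := by
    intro n
    rw [Nat.factorial_succ, Nat.cast_mul, pow_succ]
    field_simp
  have hshift : Summable fun n : ℕ => (n + 1 : ℕ) * (a (n + 1) * y ^ (n + 1) / (n + 1)!) :=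
    ((ha.shift.summable y).mul_left y).congr fun n => (hterm n).symm
  have hsummable : Summable fun n : ℕ => (n : ℝ) * (a n * y ^ n / n !) :=
    (summable_nat_add_iff 1).mp hshift
  have hmul : y * egf (fun n => a (n + 1)) y = ∑' n : ℕ, n * (a n * y ^ n / n !) := by
    rw [tsum_eq_zero_add' (f := fun n : ℕ => (n : ℝ) * (a n * y ^ n / n !)) hshift,
      tsum_congr hterm, egf, ← tsum_mul_left]
    simp
  have hsplit : egf (fun n => a (n + 2)) y = ∑' n : ℕ, n * (a n * y ^ n / n !) + ν * egf a y := by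
    rw [egf, egf, ← tsum_mul_left, ← hsummable.tsum_add ((ha.summable y).mul_left ν)]
    exact tsum_congr fun n => by rw [hrec]; ring
  rw [hmul, hsplit]
  ring

end egf

def hermiteCoeff (ν c₀ c₁ : ℝ) : ℕ → ℝ
  | 0 => c₀
  | 1 => c₁
  | n + 2 => (n + ν) * hermiteCoeff ν c₀ c₁ n

section hermiteCoeff

variable (ν c₀ c₁ : ℝ)

theorem hermiteCoeff_add_two (n : ℕ) :
    hermiteCoeff ν c₀ c₁ (n + 2) = (n + ν) * hermiteCoeff ν c₀ c₁ n := rfl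

theorem hermiteCoeff_two_mul (k : ℕ) :
    hermiteCoeff ν c₀ c₁ (2 * k) = c₀ * ∏ j ∈ range k, (ν + 2 * (j : ℝ)) := by
  induction k with
  | zero => simp [hermiteCoeff]
  | succ k ih =>
    rw [mul_add_one, hermiteCoeff_add_two, ih, prod_range_succ]
    push_cast
    ring

theorem hermiteCoeff_two_mul_add_one (k : ℕ) :
    hermiteCoeff ν c₀ c₁ (2 * k + 1) = c₁ * ∏ j ∈ range k, (ν + 2 * (j : ℝ) + 1) := by
  induction k with
  | zero => simp [hermiteCoeff]
  | succ k ih =>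
    rw [mul_add_one, show 2 * k + 2 + 1 = 2 * k + 1 + 2 by ring, hermiteCoeff_add_two, ih,
      prod_range_succ]
    push_cast
    ring

end hermiteCoeff

theorem abs_prod_range_le_pow_mul_factorial {f : ℕ → ℝ} {B : ℝ} (hf : ∀ j, |f j| ≤ B * (j + 1))
    (k : ℕ) : |∏ j ∈ range k, f j| ≤ B ^ k * k ! := by
  induction k with
  | zero => simp
  | succ k ih =>
    rw [prod_range_succ, abs_mul, pow_succ, Nat.factorial_succ, Nat.cast_mul, Nat.cast_succ]
    calc |∏ j ∈ range k, f j| * |f k| ≤ (B ^ k * k !) * (B * (k + 1)) :=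
          mul_le_mul ih (hf k) (abs_nonneg _) ((abs_nonneg _).trans ih)
      _ = B ^ k * B * ((k + 1) * k !) := by ring

theorem norm_mul_pow_div_factorial_le {c M B x : ℝ} {k : ℕ} (hc : |c| ≤ M * B ^ k * k !)
    (i : ℕ) : ‖c * x ^ (2 * k + i) / (2 * k + i)!‖ ≤ M * |x| ^ i * ((B * x ^ 2) ^ k / k !) := by
  have hfact : (k ! * k ! : ℝ) ≤ (2 * k + i)! := by
    rw [two_mul]
    exact_mod_cast (Nat.le_of_dvd (Nat.factorial_pos _)
      (Nat.factorial_mul_factorial_dvd_factorial_add k k)).trans (Nat.factorial_le (by omega))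
  have hM : 0 ≤ M * B ^ k * k ! := (abs_nonneg c).trans hc
  rw [norm_div, norm_mul, norm_pow, Real.norm_eq_abs, Real.norm_eq_abs, Real.norm_natCast]
  calc |c| * |x| ^ (2 * k + i) / (2 * k + i)!
      ≤ M * B ^ k * k ! * |x| ^ (2 * k + i) / (k ! * k !) := by gcongr
    _ = M * |x| ^ i * ((B * x ^ 2) ^ k / k !) := by
      rw [pow_add, pow_mul, sq_abs, mul_pow]
      field_simp

theorem entireEGF_hermiteCoeff (ν c₀ c₁ : ℝ) : EntireEGF (hermiteCoeff ν c₀ c₁) := by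
  have hB : ∀ (μ : ℝ) (j : ℕ), |μ + 2 * j| ≤ (|μ| + 2) * (j + 1) := fun μ j => by
    have := abs_nonneg μ
    nlinarith [abs_add_le μ (2 * j), abs_of_nonneg (by positivity : (0 : ℝ) ≤ 2 * j)]
  intro R
  refine Summable.even_add_odd ?_ ?_
  · refine (((Real.summable_pow_div_factorial _).mul_left (|c₀| * |R| ^ 0))).of_norm_bounded
      fun k => norm_mul_pow_div_factorial_le (B := |ν| + 2) ?_ 0
    rw [abs_abs, hermiteCoeff_two_mul, abs_mul, mul_assoc]
    gcongr
    exact abs_prod_range_le_pow_mul_factorial (hB ν) k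
  · refine (((Real.summable_pow_div_factorial _).mul_left (|c₁| * |R| ^ 1))).of_norm_bounded
      fun k => norm_mul_pow_div_factorial_le (B := |ν + 1| + 2) ?_ 1
    rw [abs_abs, hermiteCoeff_two_mul_add_one, abs_mul, mul_assoc]
    gcongr
    refine abs_prod_range_le_pow_mul_factorial (fun j => ?_) k
    rw [add_right_comm]
    exact hB (ν + 1) j

theorem egf_hermiteCoeff (ν c₀ c₁ y : ℝ) :
    egf (hermiteCoeff ν c₀ c₁) y = c₀ * evenSeries ν y + c₁ * oddSeries ν y := by
  set t := fun n => hermiteCoeff ν c₀ c₁ n * y ^ n / (n ! : ℝ)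
  have hs : Summable t := (entireEGF_hermiteCoeff ν c₀ c₁).summable y
  have heven : Summable fun k => t (2 * k) := hs.comp_injective (mul_right_injective₀ two_ne_zero)
  have hodd : Summable fun k => t (2 * k + 1) :=
    hs.comp_injective ((add_left_injective 1).comp (mul_right_injective₀ two_ne_zero))
  rw [egf, ← tsum_even_add_odd heven hodd, evenSeries, oddSeries, ← tsum_mul_left,
    ← tsum_mul_left]
  congr 1 <;> refine tsum_congr fun k => ?_
  · simp only [t, hermiteCoeff_two_mul, mul_assoc, mul_div_assoc]
  · simp only [t, hermiteCoeff_two_mul_add_one, mul_assoc, mul_div_assoc]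

noncomputable def DtildeCoeff (ν : ℝ) : ℕ → ℝ :=
  hermiteCoeff ν (2 ^ (-ν / 2) * √π / Gamma ((ν + 1) / 2))
    (-(2 ^ (-ν / 2) * √π * √2 / Gamma (ν / 2)))

theorem Dtilde_eq_egf (ν : ℝ) : Dtilde ν = egf (DtildeCoeff ν) := by
  ext y
  rw [DtildeCoeff, egf_hermiteCoeff, Dtilde]
  ring

theorem Dtilde_comp_decreasing_solves_OU_ODE_general (a σt b : ℝ)
    (ha : 0 < a) (hσ : 0 < σt) :
    ∃ f' f'' : ℝ → ℝ,
      (∀ r : ℝ,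
        HasDerivAt (fun r : ℝ => Dtilde (b / a) ((b - r) / (σt / Real.sqrt (2 * a))))
          (f' r) r) ∧
      (∀ r : ℝ, HasDerivAt f' (f'' r) r) ∧
      (∀ r : ℝ,
        σt ^ 2 / 2 * f'' r + a * (b - r) * f' r -
          b * Dtilde (b / a) ((b - r) / (σt / Real.sqrt (2 * a))) = 0) := by
  obtain ⟨ν, rfl⟩ : ∃ ν, b = a * ν := ⟨b / a, by field_simp⟩
  rw [mul_div_cancel_left₀ ν ha.ne']
  set σ := σt / √(2 * a) with hσ_def
  have hσ0 : σ ≠ 0 := by positivity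
  have hσt : σt ^ 2 / 2 = a * σ ^ 2 := by
    rw [hσ_def, div_pow, sq_sqrt (by positivity)]
    field_simp
  set A := DtildeCoeff ν
  have hA : EntireEGF A := entireEGF_hermiteCoeff _ _ _
  have hz : ∀ r, HasDerivAt (fun r => (a * ν - r) / σ) (-σ⁻¹) r := fun r => by
    simpa [div_eq_mul_inv] using ((hasDerivAt_id r).const_sub (a * ν)).div_const σ
  rw [Dtilde_eq_egf]
  refine ⟨fun r => egf (fun n => A (n + 1)) ((a * ν - r) / σ) * -σ⁻¹,
    fun r => egf (fun n => A (n + 2)) ((a * ν - r) / σ) * -σ⁻¹ * -σ⁻¹,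
    fun r => (hasDerivAt_egf hA _).comp r (hz r),
    fun r => ((hasDerivAt_egf hA.shift _).comp r (hz r)).mul_const _, fun r => ?_⟩
  set z := (a * ν - r) / σ
  have hode := egf_hermite_ode hA (hermiteCoeff_add_two _ _ _) z
  have hbr : a * ν - r = σ * z := (mul_div_cancel₀ _ hσ0).symm
  rw [hσt, hbr]
  field_simp
  linear_combination a * hode

/-- Let `a, σ̃ > 0` and `b > 0`, and set `σ = σ̃/√(2a)`. Then
`f(r) = D̃_{b/a}((b − r)/σ)` is twice differentiable on `ℝ` and satisfies
`(σ̃²/2) f''(r) + a (b − r) f'(r) − b f(r) = 0` for all `r ∈ ℝ`. -/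
theorem Dtilde_comp_decreasing_solves_OU_ODE (a σt b : ℝ)
    (ha : 0 < a) (hσ : 0 < σt) (hb : 0 < b) :
    ∃ f' f'' : ℝ → ℝ,
      (∀ r : ℝ,
        HasDerivAt (fun r : ℝ => Dtilde (b / a) ((b - r) / (σt / Real.sqrt (2 * a))))
          (f' r) r) ∧
      (∀ r : ℝ, HasDerivAt f' (f'' r) r) ∧
      (∀ r : ℝ,
        σt ^ 2 / 2 * f'' r + a * (b - r) * f' r -
          b * Dtilde (b / a) ((b - r) / (σt / Real.sqrt (2 * a))) = 0) :=
  Dtilde_comp_decreasing_solves_OU_ODE_general a σt b ha hσ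
end

section
/- Let a, σ̃ > 0 and b ∈ ℝ. Suppose H : ℝ → ℝ is differentiable, H(r) > 0 for all r ∈ ℝ, H satisfies the Riccati equation (σ̃²/2)·H'(r) = b − a(b − r)·H(r) − (σ̃²/2)·H(r)² for all r, and H(r) → 0 as r → −∞. Then H'(r) > 0 for all r ∈ ℝ; in particular, H is strictly increasing on ℝ. -/
/-!
Differentiating the Riccati equation shows that `H'` is differentiable and that
`(σ̃²/2) H'' = a H > 0` wherever `H' = 0`. A function whose derivative is positive at each of
its zeros can only cross zero upwards, so once `H'` is positive it stays positive. Hence if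
`H' r ≤ 0` at some `r`, then `H' ≤ 0` on `(-∞, r]`, and `H` is antitone there, so
`0 < H r ≤ lim_{s → -∞} H s = 0`, a contradiction.
-/

open Real Filter Set

section ZeroCrossing

variable {g g' : ℝ → ℝ} {x y : ℝ}

theorem nonneg_of_le_of_deriv_pos_of_eq_zero (hg : ∀ t, HasDerivAt g (g' t) t)
    (hzero : ∀ t, g t = 0 → 0 < g' t) (hx : 0 ≤ g x) (hxy : x ≤ y) : 0 ≤ g y :=
  image_le_of_deriv_right_lt_deriv_boundary (f := fun _ => 0) (f' := fun _ => 0)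
    continuousOn_const (fun _ _ => hasDerivWithinAt_const _ _ _) hx hg
    (fun t _ ht => hzero t ht.symm) ⟨hxy, le_rfl⟩

theorem pos_of_le_of_deriv_pos_of_eq_zero (hg : ∀ t, HasDerivAt g (g' t) t)
    (hzero : ∀ t, g t = 0 → 0 < g' t) (hx : 0 < g x) (hxy : x ≤ y) : 0 < g y := by
  refine (nonneg_of_le_of_deriv_pos_of_eq_zero hg hzero hx.le hxy).lt_of_ne' fun hy => ?_
  have hlt : x < y := hxy.lt_of_ne (by rintro rfl; exact hx.ne' hy)
  -- `g ≥ 0 = g y` on `[x, ∞)`, a neighbourhood of `y`, so Fermat's theorem forces `g' y = 0`.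
  have hmin : IsLocalMin g y :=
    Filter.mem_of_superset (Ici_mem_nhds hlt) fun t ht =>
      hy ▸ nonneg_of_le_of_deriv_pos_of_eq_zero hg hzero hx.le ht
  exact (hzero y hy).ne' (hmin.hasDerivAt_eq_zero (hg y))

end ZeroCrossing

theorem nonpos_of_deriv_nonpos_of_tendsto_atBot {H H' : ℝ → ℝ} {r : ℝ}
    (hd : ∀ s, HasDerivAt H (H' s) s) (hH' : ∀ s ≤ r, H' s ≤ 0)
    (hlim : Tendsto H atBot (nhds 0)) : H r ≤ 0 := by
  have hanti : AntitoneOn H (Iic r) :=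
    antitoneOn_of_hasDerivWithinAt_nonpos (convex_Iic r)
      (fun s _ => (hd s).continuousAt.continuousWithinAt)
      (fun s _ => (hd s).hasDerivWithinAt)
      (fun s hs => hH' s (interior_subset (s := Iic r) hs))
  refine ge_of_tendsto hlim ?_
  filter_upwards [eventually_le_atBot r] with s hs
  exact hanti hs (mem_Iic.mpr le_rfl) hs

theorem hasDerivAt_deriv_of_riccati {a σt b : ℝ} (hσ : σt ≠ 0) {H H' : ℝ → ℝ}
    (hd : ∀ r, HasDerivAt H (H' r) r)
    (hric : ∀ r, σt ^ 2 / 2 * H' r = b - a * (b - r) * H r - σt ^ 2 / 2 * (H r) ^ 2) (r : ℝ) :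
    HasDerivAt H' (2 / σt ^ 2 * (a * H r - (a * (b - r) + σt ^ 2 * H r) * H' r)) r := by
  have hH' : H' = fun r => 2 / σt ^ 2 * (b - a * (b - r) * H r - σt ^ 2 / 2 * (H r) ^ 2) := by
    funext r
    rw [← hric r]
    field_simp
  have hrhs := ((((hasDerivAt_id r).const_sub b).const_mul a).mul (hd r)).const_sub b
    |>.sub (((hd r).pow 2).const_mul (σt ^ 2 / 2)) |>.const_mul (2 / σt ^ 2)
  refine (hrhs.congr_of_eventuallyEq (.of_forall fun s => congrFun hH' s)).congr_deriv ?_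
  simp only [id]
  ring

/-- Let `a, σ̃ > 0` and `b ∈ ℝ`. If `H : ℝ → ℝ` is differentiable, positive, satisfies the
Riccati equation `(σ̃²/2) H'(r) = b − a (b − r) H(r) − (σ̃²/2) H(r)²`, and `H(r) → 0` as
`r → −∞`, then `H'(r) > 0` for all `r`; in particular `H` is strictly increasing. -/
theorem riccati_solution_strictMono (a σt b : ℝ) (ha : 0 < a) (hσ : 0 < σt)
    (H H' : ℝ → ℝ)
    (hd : ∀ r : ℝ, HasDerivAt H (H' r) r)
    (hpos : ∀ r : ℝ, 0 < H r)
    (hric : ∀ r : ℝ,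
      σt ^ 2 / 2 * H' r = b - a * (b - r) * H r - σt ^ 2 / 2 * (H r) ^ 2)
    (hlim : Tendsto H atBot (nhds 0)) :
    (∀ r : ℝ, 0 < H' r) ∧ StrictMono H := by
  have hH'' := hasDerivAt_deriv_of_riccati hσ.ne' hd hric
  have hzero : ∀ r, H' r = 0 →
      0 < 2 / σt ^ 2 * (a * H r - (a * (b - r) + σt ^ 2 * H r) * H' r) := by
    intro r hr
    have := hpos r
    rw [hr, mul_zero, sub_zero]
    positivity
  have hH'pos : ∀ r, 0 < H' r := by
    intro r
    by_contra! hr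
    have hH'nonpos : ∀ s ≤ r, H' s ≤ 0 := fun s hs =>
      not_lt.mp fun h => hr.not_gt (pos_of_le_of_deriv_pos_of_eq_zero hH'' hzero h hs)
    exact (hpos r).not_ge (nonpos_of_deriv_nonpos_of_tendsto_atBot hd hH'nonpos hlim)
  exact ⟨hH'pos, strictMono_of_hasDerivAt_pos hd hH'pos⟩
end

section
/- Let a, σ̃ > 0 and b ∈ ℝ. Suppose H : ℝ → ℝ is differentiable, H(r) > 0 for all r ∈ ℝ, H is monotone nondecreasing, and H satisfies the Riccati equation (σ̃²/2)·H'(r) = b − a(b − r)·H(r) − (σ̃²/2)·H(r)² for all r. Then H(r) → +∞ as r → +∞. -/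
open Real Filter Set

/-- Let `a, σ̃ > 0` and `b ∈ ℝ`. If `H : ℝ → ℝ` is differentiable, positive, monotone
nondecreasing, and satisfies the Riccati equation
`(σ̃²/2) H'(r) = b − a (b − r) H(r) − (σ̃²/2) H(r)²`, then `H(r) → +∞` as `r → +∞`. -/
theorem riccati_solution_tendsto_atTop (a σt b : ℝ) (ha : 0 < a) (hσ : 0 < σt)
    (H H' : ℝ → ℝ)
    (hd : ∀ r : ℝ, HasDerivAt H (H' r) r)
    (hpos : ∀ r : ℝ, 0 < H r)
    (hmono : Monotone H)
    (hric : ∀ r : ℝ,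
      σt ^ 2 / 2 * H' r = b - a * (b - r) * H r - σt ^ 2 / 2 * (H r) ^ 2) :
    Tendsto H atTop atTop := by
  by_cases hb : BddAbove (range H)
  · -- bounded case: derivative eventually ≥ 1, so H grows at least linearly
    obtain ⟨L, hL⟩ := hb
    have hL' : ∀ r, H r ≤ L := fun r => hL (mem_range_self r)
    set c := H 0 with hc
    have hc0 : 0 < c := hpos 0
    have hσ2 : 0 < σt ^ 2 / 2 := by positivity
    set R : ℝ := max (max b 0) (b + (σt ^ 2 / 2 + σt ^ 2 / 2 * L ^ 2 + |b|) / (a * c)) with hR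
    have hderiv1 : ∀ s, R ≤ s → 1 ≤ H' s := by
      intro s hs
      have hsb : b ≤ s := le_trans (le_trans (le_max_left _ _) (le_max_left _ _)) hs
      have hs0 : (0:ℝ) ≤ s := le_trans (le_trans (le_max_right _ _) (le_max_left _ _)) hs
      have hcs : c ≤ H s := hmono hs0
      have hsL : H s ≤ L := hL' s
      have hsb2 : b + (σt ^ 2 / 2 + σt ^ 2 / 2 * L ^ 2 + |b|) / (a * c) ≤ s :=
        le_trans (le_max_right _ _) hs
      have hac : 0 < a * c := by positivity
      have key : σt ^ 2 / 2 + σt ^ 2 / 2 * L ^ 2 + |b| ≤ a * c * (s - b) := by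
        have h1 : (σt ^ 2 / 2 + σt ^ 2 / 2 * L ^ 2 + |b|) / (a * c) ≤ s - b := by linarith
        have h2 := (div_le_iff₀ hac).mp h1
        nlinarith
      have hb1 : -|b| ≤ b := neg_abs_le b
      have hHspos := hpos s
      have hsq : H s ^ 2 ≤ L ^ 2 := by nlinarith
      have hlow : a * c * (s - b) ≤ a * (s - b) * H s := by
        have hn : 0 ≤ a * (s - b) := mul_nonneg ha.le (by linarith)
        nlinarith [mul_le_mul_of_nonneg_left hcs hn]
      have : σt ^ 2 / 2 * 1 ≤ σt ^ 2 / 2 * H' s := by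
        rw [hric s]; nlinarith
      exact le_of_mul_le_mul_left (by linarith [this]) hσ2
    -- H x ≥ H R + (x - R) for x ≥ R
    have hmonoG : MonotoneOn (fun x => H x - x) (Ici R) := by
      apply monotoneOn_of_deriv_nonneg (convex_Ici R)
      · have hH : Continuous H := continuous_iff_continuousAt.mpr fun x => (hd x).continuousAt
        exact (hH.sub continuous_id).continuousOn
      · intro x _
        exact ((hd x).sub (hasDerivAt_id x)).differentiableAt.differentiableWithinAt
      · intro x hx
        rw [interior_Ici] at hx
        have : deriv (fun x => H x - x) x = H' x - 1 := ((hd x).sub (hasDerivAt_id x)).deriv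
        rw [this]
        linarith [hderiv1 x (le_of_lt hx)]
    have hgrow : ∀ x, R ≤ x → H R + (x - R) ≤ H x := by
      intro x hx
      have := hmonoG (self_mem_Ici) (mem_Ici.mpr hx) hx
      simp only at this
      linarith
    apply tendsto_atTop_mono' atTop (f₁ := fun x => H R + (x - R))
    · filter_upwards [eventually_ge_atTop R] with x hx using hgrow x hx
    · exact tendsto_atTop_add_const_left _ _ (tendsto_atTop_add_const_right _ _ tendsto_id)
  · exact tendsto_atTop_atTop_of_monotone' hmono hb
end

section
/- Let a, σ̃ > 0 and b > 0. Suppose h : ℝ → ℝ is twice differentiable with h(r) > 0 and h''(r) ≥ 0 for all r ∈ ℝ, and h satisfies (σ̃²/2)·h''(r) + a(b − r)·h'(r) = b·h(r) for all r. Then h'(r)/h(r) ≤ b/(a(b − r)) for every r < b. If in addition h'(r) ≥ 0 for all r, then h'(r)/h(r) → 0 as r → −∞. -/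
open Real Filter Set

/-- Let `a, σ̃ > 0` and `b > 0`. Suppose `h : ℝ → ℝ` is twice differentiable with
`h(r) > 0` and `h''(r) ≥ 0` for all `r`, and satisfies
`(σ̃²/2) h''(r) + a (b − r) h'(r) = b h(r)` for all `r`. Then
`h'(r)/h(r) ≤ b/(a (b − r))` for every `r < b`; if moreover `h'(r) ≥ 0` for all `r`,
then `h'(r)/h(r) → 0` as `r → −∞`. -/
theorem log_deriv_bound_and_limit_atBot (a σt b : ℝ) (ha : 0 < a) (hσ : 0 < σt)
    (hb : 0 < b) (h h' h'' : ℝ → ℝ)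
    (hd1 : ∀ r : ℝ, HasDerivAt h (h' r) r)
    (hd2 : ∀ r : ℝ, HasDerivAt h' (h'' r) r)
    (hpos : ∀ r : ℝ, 0 < h r)
    (hconv : ∀ r : ℝ, 0 ≤ h'' r)
    (hode : ∀ r : ℝ, σt ^ 2 / 2 * h'' r + a * (b - r) * h' r = b * h r) :
    (∀ r : ℝ, r < b → h' r / h r ≤ b / (a * (b - r))) ∧
    ((∀ r : ℝ, 0 ≤ h' r) →
      Tendsto (fun r => h' r / h r) atBot (nhds 0)) := by
  have key : ∀ r : ℝ, r < b → h' r / h r ≤ b / (a * (b - r)) := by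
    intro r hr
    have hden : 0 < a * (b - r) := mul_pos ha (by linarith)
    rw [div_le_div_iff₀ (hpos r) hden]
    nlinarith [hode r, hconv r, sq_nonneg σt, hpos r]
  refine ⟨key, fun hmono => ?_⟩
  have hlim : Tendsto (fun r : ℝ => b / (a * (b - r))) atBot (nhds 0) := by
    have h1 : Tendsto (fun r : ℝ => a * (b - r)) atBot atTop :=
      (tendsto_atTop_add_const_left _ b tendsto_neg_atBot_atTop
        |>.congr (fun r => by ring)).const_mul_atTop ha
    simpa [div_eq_mul_inv, mul_comm] using h1.inv_tendsto_atTop.const_mul b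
  refine tendsto_of_tendsto_of_tendsto_of_le_of_le' tendsto_const_nhds hlim ?_ ?_
  · filter_upwards with r
    exact div_nonneg (hmono r) (hpos r).le
  · filter_upwards [eventually_lt_atBot b] with r hr using key r hr
end

section
/- Let a, σ̃ > 0 and b > 0. Suppose h : ℝ → ℝ is twice differentiable with h(r) > 0, h'(r) > 0 and h''(r) > 0 for all r ∈ ℝ, and h satisfies (σ̃²/2)·h''(r) + a(b − r)·h'(r) = b·h(r) for all r. Then there exists a unique r* ∈ ℝ such that h'(r*)/h(r*) = 1/a, and this r* satisfies r* > 0. -/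
open Real Set

/-!
Put `w = a h' - h`, so that the barrier condition reads `w(r*) = 0`. Substituting the ODE,
`w' + c w = (k r - 1) h'` with `c = 2ab/σ̃²` and `k = 2a²/σ̃²`, hence `v = e^{c r} w` has
`v' = e^{c r} (k r - 1) h'`: `v` decreases on `(-∞, 1/k]`, increases on `[1/k, ∞)`, and grows at
least linearly far to the right. The ODE at `r = 0` gives `v(0) < 0`, and at a zero of `w` it gives
`σ̃²/2 · h''(r) = a r h'(r)`, so every zero is positive. A zero in `(0, 1/k]` would lie below
`v(0) < 0`, so all zeros lie in `[1/k, ∞)`, where `v` is injective; the intermediate value theorem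
provides one.
-/

theorem exists_pos_of_le_hasDerivAt {f f' : ℝ → ℝ} {x₁ m : ℝ} (hm : 0 < m)
    (hf : ∀ x, HasDerivAt f (f' x) x) (hf' : ∀ x, x₁ ≤ x → m ≤ f' x) : ∃ R, 0 < f R := by
  have hdiff : Differentiable ℝ f := fun x => (hf x).differentiableAt
  set R := x₁ + (|f x₁| + 1) / m with hR_def
  have hR : x₁ ≤ R := le_add_of_nonneg_right (by positivity)
  have hgrowth := (convex_Ici x₁).mul_sub_le_image_sub_of_le_deriv hdiff.continuous.continuousOn
    hdiff.differentiableOn (fun x hx => (hf x).deriv ▸ hf' x (interior_subset hx))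
    x₁ self_mem_Ici R hR hR
  have hslope : m * (R - x₁) = |f x₁| + 1 := by
    rw [hR_def]; field_simp; ring
  exact ⟨R, by linarith [neg_abs_le (f x₁)]⟩

theorem existsUnique_zero_of_hasDerivAt {v v' : ℝ → ℝ} {x₀ x₁ R : ℝ}
    (hv : ∀ x, HasDerivAt v (v' x) x) (hneg : ∀ x < x₀, v' x < 0)
    (hpos : ∀ x, x₀ < x → 0 < v' x) (hx₁ : v x₁ < 0) (hR : 0 < v R)
    (hzero : ∀ x, v x = 0 → x₁ < x) : ∃! x, v x = 0 := by
  have hcont : Continuous v := continuous_iff_continuousAt.2 fun x => (hv x).continuousAt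
  have hanti : StrictAntiOn v (Iic x₀) :=
    strictAntiOn_of_hasDerivWithinAt_neg (convex_Iic x₀) hcont.continuousOn
      (fun x _ => (hv x).hasDerivWithinAt) fun x hx => hneg x (by simpa using hx)
  have hmono : StrictMonoOn v (Ici x₀) :=
    strictMonoOn_of_hasDerivWithinAt_pos (convex_Ici x₀) hcont.continuousOn
      (fun x _ => (hv x).hasDerivWithinAt) fun x hx => hpos x (by simpa using hx)
  have hzero_ge : ∀ x, v x = 0 → x₀ ≤ x := by
    intro x hx
    by_contra! hlt
    have hx₁x := hzero x hx
    linarith [hanti (hx₁x.trans hlt).le (mem_Iic.2 hlt.le) hx₁x]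
  obtain ⟨x, -, hx⟩ := intermediate_value_uIcc hcont.continuousOn
    (mem_uIcc.2 (Or.inl ⟨hx₁.le, hR.le⟩) : (0 : ℝ) ∈ uIcc (v x₁) (v R))
  exact ⟨x, hx, fun y hy => hmono.injOn (hzero_ge y hy) (hzero_ge x hx) (hy.trans hx.symm)⟩

section IntegratingFactorDeriv

variable {c k r p : ℝ}

theorem exp_mul_mul_sub_one_mul_neg (hk : 0 < k) (hr : r < k⁻¹) (hp : 0 < p) :
    exp (c * r) * ((k * r - 1) * p) < 0 :=
  mul_neg_of_pos_of_neg (exp_pos _) <| mul_neg_of_neg_of_pos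
    (by rw [sub_neg, ← mul_inv_cancel₀ hk.ne']; gcongr) hp

theorem exp_mul_mul_sub_one_mul_pos (hk : 0 < k) (hr : k⁻¹ < r) (hp : 0 < p) :
    0 < exp (c * r) * ((k * r - 1) * p) :=
  mul_pos (exp_pos _) <| mul_pos (by rw [sub_pos, ← mul_inv_cancel₀ hk.ne']; gcongr) hp

theorem le_exp_mul_mul_sub_one_mul {f : ℝ → ℝ} (hc : 0 ≤ c) (hk : 0 < k) (hf : Monotone f)
    (hf₀ : 0 < f (2 / k)) (hr : 2 / k ≤ r) :
    f (2 / k) ≤ exp (c * r) * ((k * r - 1) * f r) := by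
  have hkr : 1 ≤ k * r - 1 := by
    have := mul_le_mul_of_nonneg_left hr hk.le
    rw [mul_div_cancel₀ _ hk.ne'] at this
    linarith
  have hfr : 0 < f r := hf₀.trans_le (hf hr)
  calc f (2 / k) ≤ f r := hf hr
    _ ≤ (k * r - 1) * f r := le_mul_of_one_le_left hfr.le hkr
    _ ≤ exp (c * r) * ((k * r - 1) * f r) :=
      le_mul_of_one_le_left (mul_pos (by linarith) hfr).le
        (one_le_exp (mul_nonneg hc ((div_nonneg zero_le_two hk.le).trans hr)))

end IntegratingFactorDeriv

section BarrierODE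

variable {a σt b r : ℝ} {h h' h'' : ℝ → ℝ}

noncomputable def weightedGap (a σt b : ℝ) (h h' : ℝ → ℝ) (r : ℝ) : ℝ :=
  exp (2 * a * b / σt ^ 2 * r) * (a * h' r - h r)

theorem hasDerivAt_weightedGap (hσ : σt ≠ 0) (hd1 : HasDerivAt h (h' r) r)
    (hd2 : HasDerivAt h' (h'' r) r)
    (hode : σt ^ 2 / 2 * h'' r + a * (b - r) * h' r = b * h r) :
    HasDerivAt (weightedGap a σt b h h')
      (exp (2 * a * b / σt ^ 2 * r) * ((2 * a ^ 2 / σt ^ 2 * r - 1) * h' r)) r := by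
  set c := 2 * a * b / σt ^ 2 with hc
  have hexp : HasDerivAt (fun x => exp (c * x)) (exp (c * r) * c) r := by
    simpa using ((hasDerivAt_id r).const_mul c).exp
  refine (hexp.mul ((hd2.const_mul a).fun_sub hd1)).congr_deriv ?_
  rw [mul_assoc, ← mul_add]
  congr 1
  rw [hc]
  field_simp
  linear_combination (2 * a) * hode

theorem weightedGap_eq_zero_iff (ha : a ≠ 0) (hr : 0 < h r) :
    weightedGap a σt b h h' r = 0 ↔ h' r / h r = 1 / a := by
  rw [weightedGap, mul_eq_zero, or_iff_right (exp_pos _).ne', sub_eq_zero,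
    div_eq_div_iff hr.ne' ha, one_mul, mul_comm]

theorem weightedGap_zero_neg (hσ : σt ≠ 0) (hb : 0 < b) (h0 : 0 < h'' 0)
    (hode : σt ^ 2 / 2 * h'' 0 + a * (b - 0) * h' 0 = b * h 0) :
    weightedGap a σt b h h' 0 < 0 := by
  have hσ2 : 0 < σt ^ 2 := by positivity
  rw [weightedGap, mul_zero, exp_zero, one_mul]
  nlinarith [mul_pos hσ2 h0]

theorem pos_of_weightedGap_eq_zero (ha : 0 < a) (hσ : σt ≠ 0) (hr' : 0 < h' r)
    (hr'' : 0 < h'' r) (hode : σt ^ 2 / 2 * h'' r + a * (b - r) * h' r = b * h r)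
    (hr : weightedGap a σt b h h' r = 0) : 0 < r := by
  have hgap : a * h' r = h r := by
    simpa [weightedGap, sub_eq_zero, (exp_pos _).ne'] using hr
  have hrh : 0 < r * (a * h' r) := by
    have hode_root : σt ^ 2 / 2 * h'' r = r * (a * h' r) := by linear_combination hode - b * hgap
    rw [← hode_root]
    positivity
  exact pos_of_mul_pos_left hrh (mul_pos ha hr').le

end BarrierODE

/-- Let `a, σ̃ > 0` and `b > 0`. Suppose `h : ℝ → ℝ` is twice differentiable with
`h(r) > 0`, `h'(r) > 0` and `h''(r) > 0` for all `r`, and satisfies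
`(σ̃²/2) h''(r) + a (b − r) h'(r) = b h(r)` for all `r`. Then there exists a unique
`r*` with `h'(r*)/h(r*) = 1/a`, and this `r*` satisfies `r* > 0`. -/
theorem exists_unique_barrier (a σt b : ℝ) (ha : 0 < a) (hσ : 0 < σt) (hb : 0 < b)
    (h h' h'' : ℝ → ℝ)
    (hd1 : ∀ r : ℝ, HasDerivAt h (h' r) r)
    (hd2 : ∀ r : ℝ, HasDerivAt h' (h'' r) r)
    (hpos : ∀ r : ℝ, 0 < h r)
    (hpos' : ∀ r : ℝ, 0 < h' r)
    (hpos'' : ∀ r : ℝ, 0 < h'' r)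
    (hode : ∀ r : ℝ, σt ^ 2 / 2 * h'' r + a * (b - r) * h' r = b * h r) :
    ∃ rs : ℝ, (h' rs / h rs = 1 / a ∧ 0 < rs) ∧
      ∀ r : ℝ, h' r / h r = 1 / a → r = rs := by
  have hσ0 : σt ≠ 0 := hσ.ne'
  set c := 2 * a * b / σt ^ 2
  set k := 2 * a ^ 2 / σt ^ 2
  have hk : 0 < k := by positivity
  have hv : ∀ r, HasDerivAt (weightedGap a σt b h h') (exp (c * r) * ((k * r - 1) * h' r)) r :=
    fun r => hasDerivAt_weightedGap hσ0 (hd1 r) (hd2 r) (hode r)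
  obtain ⟨R, hR⟩ := exists_pos_of_le_hasDerivAt (hpos' (2 / k)) hv fun r hr =>
    le_exp_mul_mul_sub_one_mul (by positivity) hk
      (strictMono_of_hasDerivAt_pos hd2 hpos'').monotone (hpos' _) hr
  have hzero r (hr : weightedGap a σt b h h' r = 0) : 0 < r :=
    pos_of_weightedGap_eq_zero ha hσ0 (hpos' r) (hpos'' r) (hode r) hr
  obtain ⟨rs, hrs, huniq⟩ := existsUnique_zero_of_hasDerivAt hv
    (fun r hr => exp_mul_mul_sub_one_mul_neg hk hr (hpos' r))
    (fun r hr => exp_mul_mul_sub_one_mul_pos hk hr (hpos' r))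
    (weightedGap_zero_neg hσ0 hb (hpos'' 0) (hode 0)) hR hzero
  exact ⟨rs, ⟨(weightedGap_eq_zero_iff ha.ne' (hpos rs)).1 hrs, hzero rs hrs⟩,
    fun r hr => huniq r ((weightedGap_eq_zero_iff ha.ne' (hpos r)).2 hr)⟩
end
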